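/- arXiv:1805.01139 — 2 statements merged into one kernel-verified Lean document; each statement's English description precedes it below -/
import Mathlib

section
/- For i ∈ {1,2}, let lp_i be a coherent conditional lower prevision on C_i ⊆ C(X_i), let 𝔅_i ⊆ P_∅(X_i), and let C ⊆ C(X1×X2) be an independent domain that contains C_1 and C_2 (gambles and events being identified with their cylindrical counterparts). Then the restriction of lp1⊗lp2 to C is an independent product of lp1 and lp2, and it is pointwise smallest among them: every independent product lp of lp1 and lp2 on C satisfies lp(f|B) ≥ (lp1⊗lp2)(f|B) for all (f,B) ∈ C. Hence the independent natural extension of lp1 and lp2 on C exists and equals the restriction of lp1⊗lp2 to C. -/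
open scoped BigOperators

namespace IPaper

variable {X : Type*}

/-- A gamble on `X`: a bounded real-valued function. -/
def IsGamble (f : X → ℝ) : Prop := ∃ M : ℝ, ∀ x, |f x| ≤ M

/-- The indicator gamble of an event. -/
noncomputable def ind (B : Set X) : X → ℝ := Set.indicator B 1

/-- The set `G_{>0}(X)` of nonnegative nonzero gambles. -/
def Gpos (X : Type*) : Set (X → ℝ) := {f | IsGamble f ∧ 0 ≤ f ∧ f ≠ 0}

/-- A coherent set of desirable gambles. -/
structure CoherentSDG (D : Set (X → ℝ)) : Prop where
  subset_gambles : ∀ f ∈ D, IsGamble f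
  d1 : ∀ f : X → ℝ, IsGamble f → 0 ≤ f → f ≠ 0 → f ∈ D
  d2 : ∀ f ∈ D, ∀ l : ℝ, 0 < l → l • f ∈ D
  d3 : ∀ f ∈ D, ∀ g ∈ D, f + g ∈ D
  d4 : ∀ f : X → ℝ, f ≤ 0 → f ∉ D

/-- `posi A`: positive linear hull of `A`. -/
def posi (A : Set (X → ℝ)) : Set (X → ℝ) :=
  {g | ∃ (n : ℕ) (l : Fin (n + 1) → ℝ) (h : Fin (n + 1) → X → ℝ),
    (∀ i, 0 < l i) ∧ (∀ i, h i ∈ A) ∧ g = ∑ i, l i • h i}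

/-- `E(A) := posi (A ∪ G_{>0}(X))`. -/
def natExtSet (A : Set (X → ℝ)) : Set (X → ℝ) := posi (A ∪ Gpos X)

/-- `C(X)`: all pairs of a gamble and a nonempty event. -/
def domC (X : Type*) : Set ((X → ℝ) × Set X) := {p | IsGamble p.1 ∧ p.2.Nonempty}

/-- The conditional lower prevision `lp_D` derived from a set of gambles `D`. -/
noncomputable def lpOf (D : Set (X → ℝ)) (f : X → ℝ) (B : Set X) : EReal :=
  sSup (Real.toEReal '' {m : ℝ | (fun x => (f x - m) * ind B x) ∈ D})

/-- Coherence (Williams) of a conditional lower prevision on a domain `C`. -/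
def Coherent (C : Set ((X → ℝ) × Set X)) (lp : (X → ℝ) → Set X → EReal) : Prop :=
  ∃ D : Set (X → ℝ), CoherentSDG D ∧ ∀ p ∈ C, lp p.1 p.2 = lpOf D p.1 p.2

/-- The set `A_lp`. -/
def Alp (C : Set ((X → ℝ) × Set X)) (lp : (X → ℝ) → Set X → EReal) : Set (X → ℝ) :=
  {g | ∃ p ∈ C, ∃ m : ℝ, (m : EReal) < lp p.1 p.2 ∧ g = fun x => (p.1 x - m) * ind p.2 x}

/-- `E(lp) := E(A_lp)`. -/
def ElpSet (C : Set ((X → ℝ) × Set X)) (lp : (X → ℝ) → Set X → EReal) : Set (X → ℝ) :=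
  natExtSet (Alp C lp)

/-- The natural extension of `lp` to all of `C(X)`. -/
noncomputable def natExtLP (C : Set ((X → ℝ) × Set X)) (lp : (X → ℝ) → Set X → EReal)
    (f : X → ℝ) (B : Set X) : EReal :=
  lpOf (ElpSet C lp) f B

/-- Simple `B`-measurable gamble. -/
def SimpleMeas (Bfam : Set (Set X)) (g : X → ℝ) : Prop :=
  ∃ (c0 : ℝ) (n : ℕ) (c : Fin n → ℝ) (Bs : Fin n → Set X),
    0 ≤ c0 ∧ (∀ i, 0 ≤ c i) ∧ (∀ i, Bs i ∈ Bfam) ∧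
    g = fun x => c0 + ∑ i, c i * ind (Bs i) x

/-- `B`-measurable gamble: uniform limit of nonnegative simple `B`-measurable gambles. -/
def BMeas (Bfam : Set (Set X)) (g : X → ℝ) : Prop :=
  ∃ gs : ℕ → X → ℝ, (∀ n, 0 ≤ gs n ∧ SimpleMeas Bfam (gs n)) ∧
    TendstoUniformly gs g Filter.atTop

/-- A conditional linear prevision on `C(X)`: a coherent self-conjugate conditional
lower prevision on the full domain. -/
def CondLinPrev (P : (X → ℝ) → Set X → EReal) : Prop :=
  Coherent (domC X) P ∧ ∀ p ∈ domC X, P p.1 p.2 = -P (-p.1) p.2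

section Product

variable {X1 X2 : Type*}

/-- `A_{1→2}`. -/
def A12 (D2 : Set (X2 → ℝ)) (F1 : Set (Set X1)) : Set (X1 × X2 → ℝ) :=
  {g | ∃ f2 ∈ D2, ∃ B1 ∈ F1 ∪ {Set.univ}, g = fun p => f2 p.2 * ind B1 p.1}

/-- `A_{2→1}`. -/
def A21 (D1 : Set (X1 → ℝ)) (F2 : Set (Set X2)) : Set (X1 × X2 → ℝ) :=
  {g | ∃ f1 ∈ D1, ∃ B2 ∈ F2 ∪ {Set.univ}, g = fun p => f1 p.1 * ind B2 p.2}

/-- `D1 ⊗ D2`, relative to the families of conditioning events `F1`, `F2`. -/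
def indNatExt (D1 : Set (X1 → ℝ)) (D2 : Set (X2 → ℝ))
    (F1 : Set (Set X1)) (F2 : Set (Set X2)) : Set (X1 × X2 → ℝ) :=
  natExtSet (A12 D2 F1 ∪ A21 D1 F2)

/-- `marg_1(D)`. -/
def marg1 (D : Set (X1 × X2 → ℝ)) : Set (X1 → ℝ) :=
  {f | IsGamble f ∧ (fun p : X1 × X2 => f p.1) ∈ D}

/-- `marg_2(D)`. -/
def marg2 (D : Set (X1 × X2 → ℝ)) : Set (X2 → ℝ) :=
  {f | IsGamble f ∧ (fun p : X1 × X2 => f p.2) ∈ D}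

/-- `marg_1(D|B2)`. -/
def marg1c (D : Set (X1 × X2 → ℝ)) (B2 : Set X2) : Set (X1 → ℝ) :=
  {f | IsGamble f ∧ (fun p : X1 × X2 => f p.1 * ind B2 p.2) ∈ D}

/-- `marg_2(D|B1)`. -/
def marg2c (D : Set (X1 × X2 → ℝ)) (B1 : Set X1) : Set (X2 → ℝ) :=
  {f | IsGamble f ∧ (fun p : X1 × X2 => f p.2 * ind B1 p.1) ∈ D}

/-- Epistemic independence of a set of desirable gambles on `X1 × X2`. -/
def EpIndSDG (F1 : Set (Set X1)) (F2 : Set (Set X2)) (D : Set (X1 × X2 → ℝ)) : Prop :=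
  (∀ B2 ∈ F2, marg1c D B2 = marg1 D) ∧ (∀ B1 ∈ F1, marg2c D B1 = marg2 D)

/-- Independent product (of sets of desirable gambles). -/
def IndProductSDG (F1 : Set (Set X1)) (F2 : Set (Set X2))
    (D1 : Set (X1 → ℝ)) (D2 : Set (X2 → ℝ)) (D : Set (X1 × X2 → ℝ)) : Prop :=
  CoherentSDG D ∧ EpIndSDG F1 F2 D ∧ marg1 D = D1 ∧ marg2 D = D2

/-- The independent natural extension `lp1 ⊗ lp2` on `C(X1 × X2)`. -/
noncomputable def lpProd (C1 : Set ((X1 → ℝ) × Set X1)) (lp1 : (X1 → ℝ) → Set X1 → EReal)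
    (C2 : Set ((X2 → ℝ) × Set X2)) (lp2 : (X2 → ℝ) → Set X2 → EReal)
    (F1 : Set (Set X1)) (F2 : Set (Set X2)) :
    (X1 × X2 → ℝ) → Set (X1 × X2) → EReal :=
  lpOf (indNatExt (ElpSet C1 lp1) (ElpSet C2 lp2) F1 F2)

/-- An independent domain `C ⊆ C(X1 × X2)`. -/
def IndepDomain (F1 : Set (Set X1)) (F2 : Set (Set X2))
    (C : Set ((X1 × X2 → ℝ) × Set (X1 × X2))) : Prop :=
  (∀ (f1 : X1 → ℝ) (B1 : Set X1), IsGamble f1 → B1.Nonempty → ∀ B2 ∈ F2,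
    (((fun p : X1 × X2 => f1 p.1), B1 ×ˢ (Set.univ : Set X2)) ∈ C ↔
      ((fun p : X1 × X2 => f1 p.1), B1 ×ˢ B2) ∈ C)) ∧
  (∀ (f2 : X2 → ℝ) (B2 : Set X2), IsGamble f2 → B2.Nonempty → ∀ B1 ∈ F1,
    (((fun p : X1 × X2 => f2 p.2), (Set.univ : Set X1) ×ˢ B2) ∈ C ↔
      ((fun p : X1 × X2 => f2 p.2), B1 ×ˢ B2) ∈ C))

/-- Epistemic independence of a conditional lower prevision on a domain `C`. -/
def EpIndLP (F1 : Set (Set X1)) (F2 : Set (Set X2))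
    (C : Set ((X1 × X2 → ℝ) × Set (X1 × X2)))
    (lp : (X1 × X2 → ℝ) → Set (X1 × X2) → EReal) : Prop :=
  (∀ (f1 : X1 → ℝ) (B1 : Set X1), IsGamble f1 → B1.Nonempty →
    ((fun p : X1 × X2 => f1 p.1), B1 ×ˢ (Set.univ : Set X2)) ∈ C → ∀ B2 ∈ F2,
    lp (fun p : X1 × X2 => f1 p.1) (B1 ×ˢ (Set.univ : Set X2)) =
      lp (fun p : X1 × X2 => f1 p.1) (B1 ×ˢ B2)) ∧
  (∀ (f2 : X2 → ℝ) (B2 : Set X2), IsGamble f2 → B2.Nonempty →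
    ((fun p : X1 × X2 => f2 p.2), (Set.univ : Set X1) ×ˢ B2) ∈ C → ∀ B1 ∈ F1,
    lp (fun p : X1 × X2 => f2 p.2) ((Set.univ : Set X1) ×ˢ B2) =
      lp (fun p : X1 × X2 => f2 p.2) (B1 ×ˢ B2))

/-- Independent product of two conditional lower previsions, on the joint domain `C`. -/
def IndProductLP (F1 : Set (Set X1)) (F2 : Set (Set X2))
    (C1 : Set ((X1 → ℝ) × Set X1)) (lp1 : (X1 → ℝ) → Set X1 → EReal)
    (C2 : Set ((X2 → ℝ) × Set X2)) (lp2 : (X2 → ℝ) → Set X2 → EReal)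
    (C : Set ((X1 × X2 → ℝ) × Set (X1 × X2)))
    (lp : (X1 × X2 → ℝ) → Set (X1 × X2) → EReal) : Prop :=
  Coherent C lp ∧ EpIndLP F1 F2 C lp ∧
  (∀ p ∈ C1, lp (fun q : X1 × X2 => p.1 q.1) (p.2 ×ˢ (Set.univ : Set X2)) = lp1 p.1 p.2) ∧
  (∀ p ∈ C2, lp (fun q : X1 × X2 => p.1 q.2) ((Set.univ : Set X1) ×ˢ p.2) = lp2 p.1 p.2)

end Product

/-!
The heart of the matter is the coherence of `D1 ⊗ D2`. Its elements have the form
`∑ᵢ aᵢ(x₂) 1_{Aᵢ}(x₁) + ∑ⱼ bⱼ(x₁) 1_{Bⱼ}(x₂) + g` with `aᵢ ∈ D2`, `bⱼ ∈ D1` and `g ≥ 0`. If such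
a gamble were nonpositive, then for every `x₁` the vector `(-bⱼ(x₁))ⱼ` would lie in the cone of
those `c` for which `∑ⱼ cⱼ 1_{Bⱼ}` dominates an element of `D2 ∪ {0}`. That cone misses the open
negative orthant, so a separating functional yields weights `y ≥ 0`, `y ≠ 0`, for which
`∑ⱼ yⱼ bⱼ` is a nonpositive element of `D1`.

Coherence also fixes the (conditional) marginals: if `f₁ 1_{B₂} ∈ D1 ⊗ D2` but `f₁ ∉ D1`, then
`E(D1 ∪ {-f₁})` is coherent and its product with `D2` would contain `0`. Hence `lp1 ⊗ lp2` is
coherent, epistemically independent and extends `lp1` and `lp2`. For minimality, a coherent set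
representing any independent product contains every generator of `E(lp1) ⊗ E(lp2)`, hence that
whole set, and `lp_D` is monotone in `D`.
-/

section Gambles

variable {Y : Type*}

lemma ind_nonneg (B : Set X) (x : X) : 0 ≤ ind B x :=
  Set.indicator_nonneg (fun _ _ => zero_le_one) x

lemma ind_of_mem {B : Set X} {x : X} (hx : x ∈ B) : ind B x = 1 := by
  simp [ind, hx]

lemma ind_preimage (e : Y → X) (B : Set X) (y : Y) : ind (e ⁻¹' B) y = ind B (e y) := by
  by_cases h : e y ∈ B <;> simp [ind, h]

lemma ind_prod {X1 X2 : Type*} (B1 : Set X1) (B2 : Set X2) (p : X1 × X2) :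
    ind (B1 ×ˢ B2) p = ind B1 p.1 * ind B2 p.2 :=
  Set.indicator_prod_one

lemma nonempty_of_mem_union_univ [Nonempty X] {F : Set (Set X)} (hF : ∀ A ∈ F, A.Nonempty)
    {B : Set X} (hB : B ∈ F ∪ {Set.univ}) : B.Nonempty := by
  rcases hB with hB | rfl
  exacts [hF B hB, Set.univ_nonempty]

lemma isGamble_ind (B : Set X) : IsGamble (ind B) :=
  ⟨1, fun x => by by_cases hx : x ∈ B <;> simp [ind, hx]⟩

namespace IsGamble

variable {f g : X → ℝ}

lemma add (hf : IsGamble f) (hg : IsGamble g) : IsGamble (f + g) := by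
  obtain ⟨M, hM⟩ := hf
  obtain ⟨N, hN⟩ := hg
  exact ⟨M + N, fun x => (abs_add_le _ _).trans (add_le_add (hM x) (hN x))⟩

lemma mul (hf : IsGamble f) (hg : IsGamble g) : IsGamble (f * g) := by
  obtain ⟨M, hM⟩ := hf
  obtain ⟨N, hN⟩ := hg
  refine ⟨M * N, fun x => ?_⟩
  rw [Pi.mul_apply, abs_mul]
  exact mul_le_mul (hM x) (hN x) (abs_nonneg _) ((abs_nonneg _).trans (hM x))

lemma const (c : ℝ) : IsGamble (fun _ : X => c) := ⟨|c|, fun _ => le_rfl⟩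

lemma smul (hf : IsGamble f) (c : ℝ) : IsGamble (c • f) := (const c).mul hf

lemma neg (hf : IsGamble f) : IsGamble (-f) := by simpa using hf.smul (-1)

lemma sub (hf : IsGamble f) (hg : IsGamble g) : IsGamble (f - g) := by
  simpa [sub_eq_add_neg] using hf.add hg.neg

lemma comp (hf : IsGamble f) (e : Y → X) : IsGamble (f ∘ e) := by
  obtain ⟨M, hM⟩ := hf
  exact ⟨M, fun y => hM (e y)⟩

end IsGamble

lemma comp_mul_ind_mem_Gpos {f : X → ℝ} (hf : f ∈ Gpos X) {e : Y → X} {B : Set Y}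
    (he : ∀ x, ∃ y ∈ B, e y = x) : (fun y => f (e y) * ind B y) ∈ Gpos Y := by
  obtain ⟨hg, h0, hne⟩ := hf
  refine ⟨(hg.comp e).mul (isGamble_ind B), fun y => mul_nonneg (h0 _) (ind_nonneg B y), ?_⟩
  obtain ⟨x, hx⟩ := Function.ne_iff.mp hne
  obtain ⟨y, hy, rfl⟩ := he x
  exact Function.ne_iff.mpr ⟨y, by simpa [ind_of_mem hy] using hx⟩

end Gambles

lemma posi_subset {A S : Set (X → ℝ)} (hA : A ⊆ S) (hadd : ∀ f ∈ S, ∀ g ∈ S, f + g ∈ S)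
    (hsmul : ∀ f ∈ S, ∀ l : ℝ, 0 < l → l • f ∈ S) : posi A ⊆ S := by
  rintro _ ⟨n, l, h, hl, hh, rfl⟩
  induction n with
  | zero => simpa using hsmul _ (hA (hh 0)) _ (hl 0)
  | succ n ih =>
    rw [Fin.sum_univ_succ]
    exact hadd _ (hsmul _ (hA (hh 0)) _ (hl 0)) _
      (ih (fun i => l i.succ) (fun i => h i.succ) (fun i => hl _) (fun i => hh _))

lemma subset_posi {A : Set (X → ℝ)} : A ⊆ posi A :=
  fun f hf => ⟨0, fun _ => 1, fun _ => f, fun _ => one_pos, fun _ => hf, by simp⟩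

lemma posi_add {A : Set (X → ℝ)} {f g : X → ℝ} (hf : f ∈ posi A) (hg : g ∈ posi A) :
    f + g ∈ posi A := by
  obtain ⟨n, l, h, hl, hA, rfl⟩ := hf
  obtain ⟨m, l', h', hl', hA', rfl⟩ := hg
  refine ⟨n + 1 + m, (Fin.append l l' : Fin (n + 1 + (m + 1)) → ℝ),
    (Fin.append h h' : Fin (n + 1 + (m + 1)) → X → ℝ),
    fun i => Fin.addCases (m := n + 1) (n := m + 1) (by simpa using hl) (by simpa using hl') i,
    fun i => Fin.addCases (m := n + 1) (n := m + 1) (by simpa using hA) (by simpa using hA') i,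
    ?_⟩
  exact (Fin.sum_univ_add (fun i : Fin (n + 1 + (m + 1)) =>
    Fin.append l l' i • Fin.append h h' i)).trans (by simp) |>.symm

lemma posi_smul {A : Set (X → ℝ)} {f : X → ℝ} (hf : f ∈ posi A) {c : ℝ} (hc : 0 < c) :
    c • f ∈ posi A := by
  obtain ⟨n, l, h, hl, hA, rfl⟩ := hf
  exact ⟨n, fun i => c * l i, h, fun i => mul_pos hc (hl i), hA,
    by simp [Finset.smul_sum, smul_smul]⟩

lemma subset_natExtSet {A : Set (X → ℝ)} : A ⊆ natExtSet A :=
  fun _ hf => subset_posi (Or.inl hf)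

lemma Gpos_subset_natExtSet {A : Set (X → ℝ)} : Gpos X ⊆ natExtSet A :=
  fun _ hf => subset_posi (Or.inr hf)

lemma natExtSet_mono {A B : Set (X → ℝ)} (h : A ⊆ B) : natExtSet A ⊆ natExtSet B :=
  posi_subset (Set.union_subset (h.trans subset_natExtSet) Gpos_subset_natExtSet)
    (fun _ hf _ hg => posi_add hf hg) (fun _ hf _ hl => posi_smul hf hl)

lemma coherentSDG_natExtSet {A : Set (X → ℝ)} (hA : ∀ f ∈ A, IsGamble f)
    (hnl : ∀ f ∈ natExtSet A, ¬ f ≤ 0) : CoherentSDG (natExtSet A) where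
  subset_gambles := posi_subset (S := {f | IsGamble f}) (Set.union_subset hA fun _ hf => hf.1)
    (fun _ hf _ hg => hf.add hg) (fun _ hf l _ => hf.smul l)
  d1 _ hf h0 hne := Gpos_subset_natExtSet ⟨hf, h0, hne⟩
  d2 _ hf _ hl := posi_smul hf hl
  d3 _ hf _ hg := posi_add hf hg
  d4 f hle hf := hnl f hf hle

namespace CoherentSDG

variable {D : Set (X → ℝ)} (hD : CoherentSDG D)
include hD

lemma natExtSet_subset {A : Set (X → ℝ)} (hA : A ⊆ D) : natExtSet A ⊆ D :=
  posi_subset (Set.union_subset hA fun f hf => hD.d1 f hf.1 hf.2.1 hf.2.2) hD.d3 hD.d2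

lemma mem_of_le {f g : X → ℝ} (hf : f ∈ D) (hg : IsGamble g) (hfg : f ≤ g) : g ∈ D := by
  by_cases h : g - f = 0
  · rwa [sub_eq_zero.mp h]
  · simpa using hD.d3 _ hf _ (hD.d1 _ (hg.sub (hD.subset_gambles f hf)) (sub_nonneg.mpr hfg) h)

lemma mem_of_le_of_ne_zero {f g : X → ℝ} (hf : f ∈ insert 0 D) (hg : IsGamble g)
    (hfg : f ≤ g) (hg0 : g ≠ 0) : g ∈ D := by
  rcases hf with rfl | hf
  exacts [hD.d1 g hg hfg hg0, hD.mem_of_le hf hg hfg]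

lemma add_mem_insert_zero {f g : X → ℝ} (hf : f ∈ insert 0 D) (hg : g ∈ insert 0 D) :
    f + g ∈ insert 0 D := by
  rcases hf with rfl | hf
  · simpa using hg
  rcases hg with rfl | hg
  · simpa using Or.inr hf
  exact Or.inr (hD.d3 f hf g hg)

lemma smul_mem_insert_zero {f : X → ℝ} (hf : f ∈ insert 0 D) {c : ℝ} (hc : 0 ≤ c) :
    c • f ∈ insert 0 D := by
  rcases hc.eq_or_lt with rfl | hc
  · simp
  rcases hf with rfl | hf
  exacts [by simp, Or.inr (hD.d2 f hf c hc)]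

lemma sum_mul_mem_insert_zero {ι : Type*} {s : Finset ι} {f : ι → X → ℝ} {c : ι → ℝ}
    (hf : ∀ i ∈ s, f i ∈ D) (hc : ∀ i ∈ s, 0 ≤ c i) :
    (fun x => ∑ i ∈ s, f i x * c i) ∈ insert 0 D := by
  have : (fun x => ∑ i ∈ s, f i x * c i) = ∑ i ∈ s, c i • f i := by
    ext x
    simp [mul_comm]
  rw [this]
  exact Finset.sum_induction _ (· ∈ insert 0 D) (fun _ _ => hD.add_mem_insert_zero)
    (Set.mem_insert 0 D) fun i hi => hD.smul_mem_insert_zero (Or.inr (hf i hi)) (hc i hi)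

lemma sum_mul_mem {ι : Type*} {s : Finset ι} {f : ι → X → ℝ} {c : ι → ℝ}
    (hf : ∀ i ∈ s, f i ∈ D) (hc : ∀ i ∈ s, 0 ≤ c i) {i : ι} (hi : i ∈ s) (hci : 0 < c i) :
    (fun x => ∑ i ∈ s, f i x * c i) ∈ D := by
  classical
  have hfi : (fun x => f i x * c i) ∈ D := by
    convert hD.d2 _ (hf i hi) _ hci using 1
    ext x
    simp [mul_comm]
  have hsplit : (fun x => ∑ i ∈ s, f i x * c i)
      = (fun x => f i x * c i) + fun x => ∑ j ∈ s.erase i, f j x * c j := by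
    ext x
    exact (Finset.add_sum_erase s (fun j => f j x * c j) hi).symm
  rw [hsplit]
  rcases hD.sum_mul_mem_insert_zero (s := s.erase i) (fun j hj => hf j
    (Finset.mem_of_mem_erase hj)) (fun j hj => hc j (Finset.mem_of_mem_erase hj)) with h0 | hrest
  · rwa [h0, add_zero]
  · exact hD.d3 _ hfi _ hrest

end CoherentSDG

lemma CoherentSDG.coherentSDG_natExtSet_insert_neg {D : Set (X → ℝ)} (hD : CoherentSDG D)
    {w : X → ℝ} (hw : IsGamble w) (hw0 : w ≠ 0) (hwD : w ∉ D) :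
    CoherentSDG (natExtSet (insert (-w) D)) := by
  -- a nonpositive `t` with `t + l • w ∈ D ∪ {0}` would give `w ≥ l⁻¹ • (t + l • w)`, so `w ∈ D`
  have hsub : natExtSet (insert (-w) D) ⊆
      {t | t ∈ D ∨ ∃ l : ℝ, 0 < l ∧ t + l • w ∈ insert 0 D} := by
    refine posi_subset ?_ ?_ ?_
    · rintro t ((rfl | ht) | ⟨hg, h0, hne⟩)
      · exact Or.inr ⟨1, one_pos, by simp⟩
      · exact Or.inl ht
      · exact Or.inl (hD.d1 t hg h0 hne)
    · rintro t (ht | ⟨l, hl, ht⟩) t' (ht' | ⟨l', hl', ht'⟩)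
      · exact Or.inl (hD.d3 t ht t' ht')
      · refine Or.inr ⟨l', hl', ?_⟩
        rw [add_assoc]
        exact hD.add_mem_insert_zero (Or.inr ht) ht'
      · refine Or.inr ⟨l, hl, ?_⟩
        rw [add_right_comm]
        exact hD.add_mem_insert_zero ht (Or.inr ht')
      · refine Or.inr ⟨l + l', add_pos hl hl', ?_⟩
        rw [add_smul, add_add_add_comm]
        exact hD.add_mem_insert_zero ht ht'
    · rintro t (ht | ⟨l, hl, ht⟩) c hc
      · exact Or.inl (hD.d2 t ht c hc)
      · refine Or.inr ⟨c * l, mul_pos hc hl, ?_⟩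
        rw [mul_smul, ← smul_add]
        exact hD.smul_mem_insert_zero ht hc.le
  refine coherentSDG_natExtSet ?_ fun t ht hle => ?_
  · rintro f (rfl | hf)
    exacts [hw.neg, hD.subset_gambles f hf]
  rcases hsub ht with htD | ⟨l, hl, ht⟩
  · exact hD.d4 t hle htD
  refine hwD (hD.mem_of_le_of_ne_zero (hD.smul_mem_insert_zero ht (inv_nonneg.mpr hl.le)) hw
    (fun x => ?_) hw0)
  have := hle x
  simp only [Pi.smul_apply, Pi.add_apply, smul_eq_mul, Pi.zero_apply] at this ⊢
  rw [mul_add, inv_mul_cancel_left₀ hl.ne']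
  nlinarith [inv_pos.mpr hl]

section LowerPrevisions

lemma lpOf_mono {D D' : Set (X → ℝ)} (h : D ⊆ D') (f : X → ℝ) (B : Set X) :
    lpOf D f B ≤ lpOf D' f B :=
  sSup_le_sSup (Set.image_mono fun _ hm => h hm)

lemma mem_of_lt_lpOf {D : Set (X → ℝ)} (hD : CoherentSDG D) {f : X → ℝ} {B : Set X} {m : ℝ}
    (hm : (m : EReal) < lpOf D f B) : (fun x => (f x - m) * ind B x) ∈ D := by
  obtain ⟨_, ⟨m', hm', rfl⟩, hmm'⟩ := lt_sSup_iff.mp hm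
  have hmm' : m < m' := EReal.coe_lt_coe_iff.mp hmm'
  have hg : IsGamble fun x => (f x - m) * ind B x := by
    convert (hD.subset_gambles _ hm').add ((isGamble_ind B).smul (m' - m)) using 1
    ext x
    simp only [Pi.add_apply, Pi.smul_apply, smul_eq_mul]
    ring
  refine hD.mem_of_le hm' hg fun x => ?_
  have := ind_nonneg B x
  dsimp only
  nlinarith

lemma le_lpOf {D : Set (X → ℝ)} {f : X → ℝ} {B : Set X} {a : EReal}
    (h : ∀ m : ℝ, (m : EReal) < a → (fun x => (f x - m) * ind B x) ∈ D) : a ≤ lpOf D f B :=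
  EReal.ge_of_forall_gt_iff_ge.mp fun m hm => le_sSup (Set.mem_image_of_mem _ (h m hm))

variable {C : Set ((X → ℝ) × Set X)} {lp : (X → ℝ) → Set X → EReal}

lemma ElpSet_subset {D : Set (X → ℝ)} (hD : CoherentSDG D)
    (hval : ∀ p ∈ C, lp p.1 p.2 = lpOf D p.1 p.2) : ElpSet C lp ⊆ D :=
  hD.natExtSet_subset fun _ ⟨p, hp, _, hm, hg⟩ => hg ▸ mem_of_lt_lpOf hD (hval p hp ▸ hm)

namespace Coherent

lemma coherentSDG_ElpSet (hlp : Coherent C lp) : CoherentSDG (ElpSet C lp) := by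
  obtain ⟨D, hD, hval⟩ := hlp
  have hsub := ElpSet_subset hD hval
  exact coherentSDG_natExtSet (fun f hf => hD.subset_gambles f (hsub (subset_natExtSet hf)))
    fun f hf hle => hD.d4 f hle (hsub hf)

lemma natExtLP_eq (hlp : Coherent C lp) {p : (X → ℝ) × Set X} (hp : p ∈ C) :
    natExtLP C lp p.1 p.2 = lp p.1 p.2 := by
  obtain ⟨D, hD, hval⟩ := hlp
  refine le_antisymm ?_ (le_lpOf fun m hm => subset_natExtSet ⟨p, hp, m, hm, rfl⟩)
  rw [hval p hp]
  exact lpOf_mono (ElpSet_subset hD hval) _ _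

end Coherent

lemma CoherentSDG.comp_mul_ind_mem_of_mem_ElpSet {Y : Type*} {D : Set (Y → ℝ)}
    (hD : CoherentSDG D) {e : Y → X} {B : Set Y} (he : ∀ x, ∃ y ∈ B, e y = x)
    (hgen : ∀ q ∈ C, ∀ m : ℝ, (m : EReal) < lp q.1 q.2 →
      (fun y => (q.1 (e y) - m) * ind q.2 (e y) * ind B y) ∈ D)
    {f : X → ℝ} (hf : f ∈ ElpSet C lp) : (fun y => f (e y) * ind B y) ∈ D := by
  refine posi_subset (S := {f | (fun y => f (e y) * ind B y) ∈ D}) ?_ ?_ ?_ hf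
  · rintro _ (⟨q, hq, m, hm, rfl⟩ | hg)
    · exact hgen q hq m hm
    · obtain ⟨hg, h0, hne⟩ := comp_mul_ind_mem_Gpos hg he
      exact hD.d1 _ hg h0 hne
  · intro f hf g hg
    show (fun y => (f + g) (e y) * ind B y) ∈ D
    convert hD.d3 _ hf _ hg using 1
    ext y
    simp [add_mul]
  · intro f hf l hl
    show (fun y => (l • f) (e y) * ind B y) ∈ D
    convert hD.d2 _ hf l hl using 1
    ext y
    simp [mul_assoc]

end LowerPrevisions

lemma exists_sum_mul_nonneg_of_convexCone {κ : Type*} [Fintype κ] (K : ConvexCone ℝ (κ → ℝ))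
    (hK0 : (0 : κ → ℝ) ∈ K) (hK : ∀ c ∈ K, ∃ j, 0 ≤ c j) :
    ∃ y : κ → ℝ, (∀ c ∈ K, 0 ≤ ∑ j, y j * c j) ∧ 0 < ∑ j, y j := by
  classical
  let N : Set (κ → ℝ) := Set.univ.pi fun _ => Set.Iio 0
  have hdisj : Disjoint N K := Set.disjoint_left.mpr fun c hcN hcK => by
    obtain ⟨j, hj⟩ := hK c hcK
    exact (hcN j trivial).not_ge hj
  obtain ⟨f, u, hfN, hfK⟩ := geometric_hahn_banach_open (convex_pi fun _ _ => convex_Iio 0)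
    (isOpen_set_pi Set.finite_univ fun _ _ => isOpen_Iio) K.convex hdisj
  have hu : u ≤ 0 := by simpa using hfK 0 hK0
  have hfK' : ∀ c ∈ K, 0 ≤ f c := fun c hc => by
    by_contra! hneg
    have := hfK _ (K.smul_mem (c := (u - 1) / f c) (div_pos_of_neg_of_neg (by linarith) hneg) hc)
    rw [map_smul, smul_eq_mul, div_mul_cancel₀ _ hneg.ne] at this
    linarith
  have hsum : ∀ c, f c = ∑ j, f (fun k => if j = k then 1 else 0) * c j := fun c => by
    simp_rw [mul_comm _ (c _)]
    exact f.toLinearMap.pi_apply_eq_sum_univ c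
  refine ⟨fun j => f (fun k => if j = k then 1 else 0), fun c hc => hsum c ▸ hfK' c hc, ?_⟩
  have := hfN (fun _ => -1) fun _ _ => show (-1 : ℝ) < 0 from neg_one_lt_zero
  rw [hsum] at this
  simp only [mul_neg, mul_one, Finset.sum_neg_distrib] at this
  linarith

section Product

variable {X1 X2 : Type*}

lemma not_forall_add_sum_mul_ind_nonpos {κ : Type*} [Fintype κ] [Nonempty κ]
    {D1 : Set (X1 → ℝ)} {D2 : Set (X2 → ℝ)} (hD1 : CoherentSDG D1) (hD2 : CoherentSDG D2)
    {a : X1 → X2 → ℝ} (ha : ∀ x1, a x1 ∈ insert 0 D2) {b : κ → X1 → ℝ} (hb : ∀ j, b j ∈ D1)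
    {B : κ → Set X2} (hB : ∀ j, (B j).Nonempty) :
    ¬ ∀ x1 x2, a x1 x2 + ∑ j, b j x1 * ind (B j) x2 ≤ 0 := by
  classical
  intro hle
  let K : ConvexCone ℝ (κ → ℝ) :=
    { carrier := {c | ∃ h ∈ insert 0 D2, h ≤ fun x2 => ∑ j, c j * ind (B j) x2}
      smul_mem' := fun l hl c ⟨h, hh, hhc⟩ => ⟨l • h, hD2.smul_mem_insert_zero hh hl.le,
        fun x2 => by
          simpa [Finset.mul_sum, mul_assoc] using mul_le_mul_of_nonneg_left (hhc x2) hl.le⟩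
      add_mem' := fun c ⟨h, hh, hhc⟩ c' ⟨h', hh', hhc'⟩ =>
        ⟨h + h', hD2.add_mem_insert_zero hh hh', fun x2 => by
          simpa [add_mul, Finset.sum_add_distrib] using add_le_add (hhc x2) (hhc' x2)⟩ }
  have hK0 : (0 : κ → ℝ) ∈ K := ⟨0, Set.mem_insert _ _, fun _ => by simp⟩
  have hK : ∀ c ∈ K, ∃ j, 0 ≤ c j := by
    rintro c ⟨h, hh, hhc⟩
    by_contra! hneg
    have hneg' : ∀ x2, ∑ j, c j * ind (B j) x2 ≤ 0 := fun x2 =>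
      Finset.sum_nonpos fun j _ => mul_nonpos_of_nonpos_of_nonneg (hneg j).le (ind_nonneg _ _)
    rcases hh with rfl | hh
    · obtain ⟨j⟩ := ‹Nonempty κ›
      obtain ⟨x2, hx2⟩ := hB j
      have hlt : ∑ j, c j * ind (B j) x2 < ∑ _j : κ, (0 : ℝ) :=
        Finset.sum_lt_sum (fun j _ => mul_nonpos_of_nonpos_of_nonneg (hneg j).le (ind_nonneg _ _))
          ⟨j, Finset.mem_univ j, by simpa [ind_of_mem hx2] using hneg j⟩
      simp only [Finset.sum_const_zero] at hlt
      exact hlt.not_ge (hhc x2)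
    · exact hD2.d4 h (fun x2 => (hhc x2).trans (hneg' x2)) hh
  obtain ⟨y, hyK, hy⟩ := exists_sum_mul_nonneg_of_convexCone K hK0 hK
  have hy0 : ∀ j, 0 ≤ y j := fun j => by
    simpa [Pi.single_apply] using hyK (Pi.single j 1) ⟨0, Set.mem_insert _ _,
      fun x2 => by simpa [Pi.single_apply] using ind_nonneg (B j) x2⟩
  obtain ⟨j, hj⟩ : ∃ j, 0 < y j := by
    by_contra! h
    exact hy.not_ge (Finset.sum_nonpos fun j _ => h j)
  refine hD1.d4 _ (fun x1 => ?_) (hD1.sum_mul_mem (fun j _ => hb j) (fun j _ => hy0 j)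
    (Finset.mem_univ j) hj)
  have := hyK (fun j => -b j x1) ⟨a x1, ha x1, fun x2 => by
    simpa [neg_mul, Finset.sum_neg_distrib] using le_neg_iff_add_nonpos_right.mpr (hle x1 x2)⟩
  simpa [mul_comm] using this

def IsProductCombination (D1 : Set (X1 → ℝ)) (D2 : Set (X2 → ℝ)) (t : X1 × X2 → ℝ) : Prop :=
  ∃ (ι κ : Type) (_ : Fintype ι) (_ : Fintype κ) (a : ι → X2 → ℝ) (A : ι → Set X1)
    (b : κ → X1 → ℝ) (B : κ → Set X2) (g : X1 × X2 → ℝ),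
    (∀ i, a i ∈ D2 ∧ (A i).Nonempty) ∧ (∀ j, b j ∈ D1 ∧ (B j).Nonempty) ∧ 0 ≤ g ∧
    (Nonempty ι ∨ Nonempty κ ∨ g ≠ 0) ∧
    t = fun p => ∑ i, a i p.2 * ind (A i) p.1 + ∑ j, b j p.1 * ind (B j) p.2 + g p

variable {D1 : Set (X1 → ℝ)} {D2 : Set (X2 → ℝ)} {F1 : Set (Set X1)} {F2 : Set (Set X2)}

lemma IsProductCombination.not_nonpos (hD1 : CoherentSDG D1) (hD2 : CoherentSDG D2) {t : X1 × X2 → ℝ}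
    (ht : IsProductCombination D1 D2 t) : ¬ t ≤ 0 := by
  obtain ⟨ι, κ, _, _, a, A, b, B, g, ha, hb, hg, hne, rfl⟩ := ht
  intro hle
  have hle' : ∀ x1 x2, ∑ i, a i x2 * ind (A i) x1 + ∑ j, b j x1 * ind (B j) x2 ≤ 0 :=
    fun x1 x2 => by linarith [hle (x1, x2), hg (x1, x2)]
  rcases isEmpty_or_nonempty κ with hκ | hκ
  · rcases isEmpty_or_nonempty ι with hι | hι
    · have : g = 0 := le_antisymm (fun p => by simpa using hle p) hg
      rcases hne with hι' | hκ' | hg0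
      exacts [not_isEmpty_of_nonempty ι hι, not_isEmpty_of_nonempty κ hκ, hg0 this]
    · exact not_forall_add_sum_mul_ind_nonpos hD2 hD1
        (fun x2 => hD1.sum_mul_mem_insert_zero (fun j _ => (hb j).1) fun j _ => ind_nonneg _ _)
        (fun i => (ha i).1) (fun i => (ha i).2) fun x2 x1 => by linarith [hle' x1 x2]
  · exact not_forall_add_sum_mul_ind_nonpos hD1 hD2
      (fun x1 => hD2.sum_mul_mem_insert_zero (fun i _ => (ha i).1) fun i _ => ind_nonneg _ _)
      (fun j => (hb j).1) (fun j => (hb j).2) hle'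

lemma IsProductCombination.add {t t' : X1 × X2 → ℝ} (ht : IsProductCombination D1 D2 t)
    (ht' : IsProductCombination D1 D2 t') : IsProductCombination D1 D2 (t + t') := by
  obtain ⟨ι, κ, _, _, a, A, b, B, g, ha, hb, hg, hne, rfl⟩ := ht
  obtain ⟨ι', κ', _, _, a', A', b', B', g', ha', hb', hg', -, rfl⟩ := ht'
  refine ⟨ι ⊕ ι', κ ⊕ κ', inferInstance, inferInstance, Sum.elim a a', Sum.elim A A',
    Sum.elim b b', Sum.elim B B', g + g', Sum.rec ha ha', Sum.rec hb hb', add_nonneg hg hg',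
    ?_, ?_⟩
  · rcases hne with hι | hκ | hg0
    · exact Or.inl inferInstance
    · exact Or.inr (Or.inl inferInstance)
    · exact Or.inr (Or.inr fun h0 => hg0 ((add_eq_zero_iff_of_nonneg hg hg').mp h0).1)
  · ext p
    simp only [Fintype.sum_sum_type, Sum.elim_inl, Sum.elim_inr, Pi.add_apply]
    ring

lemma IsProductCombination.smul (hD1 : CoherentSDG D1) (hD2 : CoherentSDG D2)
    {t : X1 × X2 → ℝ} (ht : IsProductCombination D1 D2 t) {l : ℝ} (hl : 0 < l) :
    IsProductCombination D1 D2 (l • t) := by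
  obtain ⟨ι, κ, _, _, a, A, b, B, g, ha, hb, hg, hne, rfl⟩ := ht
  refine ⟨ι, κ, inferInstance, inferInstance, fun i => l • a i, A, fun j => l • b j, B, l • g,
    fun i => ⟨hD2.d2 _ (ha i).1 l hl, (ha i).2⟩, fun j => ⟨hD1.d2 _ (hb j).1 l hl, (hb j).2⟩,
    smul_nonneg hl.le hg, ?_, ?_⟩
  · rcases hne with hι | hκ | hg0
    exacts [Or.inl hι, Or.inr (Or.inl hκ), Or.inr (Or.inr (smul_ne_zero hl.ne' hg0))]
  · ext p
    simp only [Pi.smul_apply, smul_eq_mul, mul_add, Finset.mul_sum, mul_assoc]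

lemma isProductCombination_of_mem_indNatExt [Nonempty X1] [Nonempty X2] (hD1 : CoherentSDG D1)
    (hD2 : CoherentSDG D2) (hF1 : ∀ A ∈ F1, A.Nonempty) (hF2 : ∀ A ∈ F2, A.Nonempty)
    {t : X1 × X2 → ℝ} (ht : t ∈ indNatExt D1 D2 F1 F2) : IsProductCombination D1 D2 t := by
  refine posi_subset (S := {t | IsProductCombination D1 D2 t}) ?_ (fun _ ht _ ht' => ht.add ht')
    (fun _ ht _ hl => ht.smul hD1 hD2 hl) ht
  rintro _ ((⟨f2, hf2, B1, hB1, rfl⟩ | ⟨f1, hf1, B2, hB2, rfl⟩) | ⟨-, hg0, hne⟩)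
  · exact ⟨Unit, Empty, inferInstance, inferInstance, fun _ => f2, fun _ => B1, Empty.elim,
      Empty.elim, 0, fun _ => ⟨hf2, nonempty_of_mem_union_univ hF1 hB1⟩, Empty.rec, le_rfl,
      Or.inl inferInstance, by ext; simp⟩
  · exact ⟨Empty, Unit, inferInstance, inferInstance, Empty.elim, Empty.elim, fun _ => f1,
      fun _ => B2, 0, Empty.rec, fun _ => ⟨hf1, nonempty_of_mem_union_univ hF2 hB2⟩, le_rfl,
      Or.inr (Or.inl inferInstance), by ext; simp⟩
  · exact ⟨Empty, Empty, inferInstance, inferInstance, Empty.elim, Empty.elim, Empty.elim,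
      Empty.elim, _, Empty.rec, Empty.rec, hg0, Or.inr (Or.inr hne), by ext; simp⟩

lemma coherentSDG_indNatExt [Nonempty X1] [Nonempty X2] (hD1 : CoherentSDG D1)
    (hD2 : CoherentSDG D2) (hF1 : ∀ A ∈ F1, A.Nonempty) (hF2 : ∀ A ∈ F2, A.Nonempty) :
    CoherentSDG (indNatExt D1 D2 F1 F2) := by
  refine coherentSDG_natExtSet ?_
    fun t ht => (isProductCombination_of_mem_indNatExt hD1 hD2 hF1 hF2 ht).not_nonpos hD1 hD2
  rintro _ (⟨f2, hf2, B1, -, rfl⟩ | ⟨f1, hf1, B2, -, rfl⟩)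
  · exact ((hD2.subset_gambles f2 hf2).comp Prod.snd).mul ((isGamble_ind B1).comp Prod.fst)
  · exact ((hD1.subset_gambles f1 hf1).comp Prod.fst).mul ((isGamble_ind B2).comp Prod.snd)

lemma indNatExt_mono_left {D1' : Set (X1 → ℝ)} (h : D1 ⊆ D1') :
    indNatExt D1 D2 F1 F2 ⊆ indNatExt D1' D2 F1 F2 :=
  natExtSet_mono (Set.union_subset_union_right _ fun _ ⟨f1, hf1, B2, hB2, hg⟩ =>
    ⟨f1, h hf1, B2, hB2, hg⟩)

lemma mem_of_mul_ind_mem_indNatExt [Nonempty X1] [Nonempty X2] (hD1 : CoherentSDG D1)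
    (hD2 : CoherentSDG D2) (hF1 : ∀ A ∈ F1, A.Nonempty) (hF2 : ∀ A ∈ F2, A.Nonempty)
    {f1 : X1 → ℝ} (hf1 : IsGamble f1) {B2 : Set X2} (hB2 : B2 ∈ F2 ∪ {Set.univ})
    (hmem : (fun p : X1 × X2 => f1 p.1 * ind B2 p.2) ∈ indNatExt D1 D2 F1 F2) : f1 ∈ D1 := by
  by_contra hf1D
  by_cases h0 : f1 = 0
  · subst h0
    exact (coherentSDG_indNatExt hD1 hD2 hF1 hF2).d4 _ (fun p => by simp) hmem
  have hprod :=
    coherentSDG_indNatExt (hD1.coherentSDG_natExtSet_insert_neg hf1 h0 hf1D) hD2 hF1 hF2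
  have hneg : (fun p : X1 × X2 => (-f1) p.1 * ind B2 p.2) ∈
      indNatExt (natExtSet (insert (-f1) D1)) D2 F1 F2 :=
    subset_natExtSet (Or.inr ⟨-f1, subset_natExtSet (Set.mem_insert _ _), B2, hB2, rfl⟩)
  have hpos := indNatExt_mono_left (D1' := natExtSet (insert (-f1) D1))
    ((Set.subset_insert _ _).trans subset_natExtSet) hmem
  exact hprod.d4 _ (fun p => by simp) (hprod.d3 _ hpos _ hneg)

lemma lpOf_indNatExt_fst [Nonempty X1] [Nonempty X2] (hD1 : CoherentSDG D1)
    (hD2 : CoherentSDG D2) (hF1 : ∀ A ∈ F1, A.Nonempty) (hF2 : ∀ A ∈ F2, A.Nonempty)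
    {f1 : X1 → ℝ} (hf1 : IsGamble f1) (B1 : Set X1) {B2 : Set X2}
    (hB2 : B2 ∈ F2 ∪ {Set.univ}) :
    lpOf (indNatExt D1 D2 F1 F2) (fun p => f1 p.1) (B1 ×ˢ B2) = lpOf D1 f1 B1 := by
  unfold lpOf
  congr 2
  ext m
  have hrw : (fun p : X1 × X2 => (f1 p.1 - m) * ind (B1 ×ˢ B2) p)
      = fun p => (fun x1 => (f1 x1 - m) * ind B1 x1) p.1 * ind B2 p.2 := by
    ext p
    rw [ind_prod]
    ring
  simp only [Set.mem_ofPred_eq, hrw]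
  exact ⟨mem_of_mul_ind_mem_indNatExt hD1 hD2 hF1 hF2
    ((hf1.sub (IsGamble.const m)).mul (isGamble_ind B1)) hB2,
    fun h => subset_natExtSet (Or.inr ⟨_, h, B2, hB2, rfl⟩)⟩

lemma comp_swap_mem_indNatExt {t : X1 × X2 → ℝ} (ht : t ∈ indNatExt D1 D2 F1 F2) :
    t ∘ Prod.swap ∈ indNatExt D2 D1 F2 F1 := by
  refine posi_subset (S := {t | t ∘ Prod.swap ∈ indNatExt D2 D1 F2 F1}) ?_
    (fun _ hf _ hg => posi_add hf hg) (fun _ hf _ hl => posi_smul hf hl) ht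
  rintro _ ((⟨f2, hf2, B1, hB1, rfl⟩ | ⟨f1, hf1, B2, hB2, rfl⟩) | ⟨hg, h0, hne⟩)
  · exact subset_natExtSet (Or.inr ⟨f2, hf2, B1, hB1, rfl⟩)
  · exact subset_natExtSet (Or.inl ⟨f1, hf1, B2, hB2, rfl⟩)
  · exact Gpos_subset_natExtSet ⟨hg.comp _, fun p => h0 _,
      fun h => hne (funext fun p => by simpa using congrFun h p.swap)⟩

lemma lpOf_indNatExt_swap (f : X1 × X2 → ℝ) (B : Set (X1 × X2)) :
    lpOf (indNatExt D1 D2 F1 F2) f B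
      = lpOf (indNatExt D2 D1 F2 F1) (f ∘ Prod.swap) (Prod.swap ⁻¹' B) := by
  unfold lpOf
  congr 2
  ext m
  simp only [Set.mem_ofPred_eq, ind_preimage, Function.comp_apply]
  exact ⟨comp_swap_mem_indNatExt, comp_swap_mem_indNatExt⟩

end Product

section IndependentProduct

variable {X1 X2 : Type*} {C1 : Set ((X1 → ℝ) × Set X1)} {lp1 : (X1 → ℝ) → Set X1 → EReal}
  {C2 : Set ((X2 → ℝ) × Set X2)} {lp2 : (X2 → ℝ) → Set X2 → EReal}
  {F1 : Set (Set X1)} {F2 : Set (Set X2)}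

lemma lpProd_fst [Nonempty X1] [Nonempty X2] (hlp1 : Coherent C1 lp1) (hlp2 : Coherent C2 lp2)
    (hF1 : ∀ A ∈ F1, A.Nonempty) (hF2 : ∀ A ∈ F2, A.Nonempty) {f1 : X1 → ℝ} (hf1 : IsGamble f1)
    (B1 : Set X1) {B2 : Set X2} (hB2 : B2 ∈ F2 ∪ {Set.univ}) :
    lpProd C1 lp1 C2 lp2 F1 F2 (fun p => f1 p.1) (B1 ×ˢ B2) = natExtLP C1 lp1 f1 B1 :=
  lpOf_indNatExt_fst hlp1.coherentSDG_ElpSet hlp2.coherentSDG_ElpSet hF1 hF2 hf1 B1 hB2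

lemma lpProd_snd [Nonempty X1] [Nonempty X2] (hlp1 : Coherent C1 lp1) (hlp2 : Coherent C2 lp2)
    (hF1 : ∀ A ∈ F1, A.Nonempty) (hF2 : ∀ A ∈ F2, A.Nonempty) {f2 : X2 → ℝ} (hf2 : IsGamble f2)
    {B1 : Set X1} (B2 : Set X2) (hB1 : B1 ∈ F1 ∪ {Set.univ}) :
    lpProd C1 lp1 C2 lp2 F1 F2 (fun p => f2 p.2) (B1 ×ˢ B2) = natExtLP C2 lp2 f2 B2 := by
  rw [lpProd, lpOf_indNatExt_swap, Set.preimage_swap_prod]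
  exact lpOf_indNatExt_fst hlp2.coherentSDG_ElpSet hlp1.coherentSDG_ElpSet hF2 hF1 hf2 B2 hB1

lemma coherent_lpProd [Nonempty X1] [Nonempty X2] (hlp1 : Coherent C1 lp1)
    (hlp2 : Coherent C2 lp2) (hF1 : ∀ A ∈ F1, A.Nonempty) (hF2 : ∀ A ∈ F2, A.Nonempty)
    (C : Set ((X1 × X2 → ℝ) × Set (X1 × X2))) : Coherent C (lpProd C1 lp1 C2 lp2 F1 F2) :=
  ⟨_, coherentSDG_indNatExt hlp1.coherentSDG_ElpSet hlp2.coherentSDG_ElpSet hF1 hF2,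
    fun _ _ => rfl⟩

namespace IndProductLP

variable {C : Set ((X1 × X2 → ℝ) × Set (X1 × X2))} {lp : (X1 × X2 → ℝ) → Set (X1 × X2) → EReal}

lemma prod_fst_mem_and_eq (hlp : IndProductLP F1 F2 C1 lp1 C2 lp2 C lp) (hC1 : C1 ⊆ domC X1)
    (hCind : IndepDomain F1 F2 C)
    (hCC1 : ∀ p ∈ C1, ((fun q : X1 × X2 => p.1 q.1), p.2 ×ˢ (Set.univ : Set X2)) ∈ C)
    {q : (X1 → ℝ) × Set X1} (hq : q ∈ C1) {B2 : Set X2} (hB2 : B2 ∈ F2 ∪ {Set.univ}) :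
    ((fun p : X1 × X2 => q.1 p.1), q.2 ×ˢ B2) ∈ C ∧
      lp (fun p => q.1 p.1) (q.2 ×ˢ B2) = lp1 q.1 q.2 := by
  rcases hB2 with hB2 | rfl
  · exact ⟨(hCind.1 q.1 q.2 (hC1 hq).1 (hC1 hq).2 B2 hB2).mp (hCC1 q hq),
      (hlp.2.1.1 q.1 q.2 (hC1 hq).1 (hC1 hq).2 (hCC1 q hq) B2 hB2).symm.trans (hlp.2.2.1 q hq)⟩
  · exact ⟨hCC1 q hq, hlp.2.2.1 q hq⟩

lemma prod_snd_mem_and_eq (hlp : IndProductLP F1 F2 C1 lp1 C2 lp2 C lp) (hC2 : C2 ⊆ domC X2)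
    (hCind : IndepDomain F1 F2 C)
    (hCC2 : ∀ p ∈ C2, ((fun q : X1 × X2 => p.1 q.2), (Set.univ : Set X1) ×ˢ p.2) ∈ C)
    {q : (X2 → ℝ) × Set X2} (hq : q ∈ C2) {B1 : Set X1} (hB1 : B1 ∈ F1 ∪ {Set.univ}) :
    ((fun p : X1 × X2 => q.1 p.2), B1 ×ˢ q.2) ∈ C ∧
      lp (fun p => q.1 p.2) (B1 ×ˢ q.2) = lp2 q.1 q.2 := by
  rcases hB1 with hB1 | rfl
  · exact ⟨(hCind.2 q.1 q.2 (hC2 hq).1 (hC2 hq).2 B1 hB1).mp (hCC2 q hq),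
      (hlp.2.1.2 q.1 q.2 (hC2 hq).1 (hC2 hq).2 (hCC2 q hq) B1 hB1).symm.trans (hlp.2.2.2 q hq)⟩
  · exact ⟨hCC2 q hq, hlp.2.2.2 q hq⟩

lemma indNatExt_subset [Nonempty X1] [Nonempty X2] (hlp : IndProductLP F1 F2 C1 lp1 C2 lp2 C lp)
    (hC1 : C1 ⊆ domC X1) (hC2 : C2 ⊆ domC X2)
    (hF1 : ∀ A ∈ F1, A.Nonempty) (hF2 : ∀ A ∈ F2, A.Nonempty) (hCind : IndepDomain F1 F2 C)
    (hCC1 : ∀ p ∈ C1, ((fun q : X1 × X2 => p.1 q.1), p.2 ×ˢ (Set.univ : Set X2)) ∈ C)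
    (hCC2 : ∀ p ∈ C2, ((fun q : X1 × X2 => p.1 q.2), (Set.univ : Set X1) ×ˢ p.2) ∈ C)
    {D : Set (X1 × X2 → ℝ)} (hD : CoherentSDG D)
    (hval : ∀ p ∈ C, lp p.1 p.2 = lpOf D p.1 p.2) :
    indNatExt (ElpSet C1 lp1) (ElpSet C2 lp2) F1 F2 ⊆ D := by
  refine hD.natExtSet_subset (Set.union_subset ?_ ?_)
  · rintro _ ⟨f2, hf2, B1, hB1, rfl⟩
    obtain ⟨x1, hx1⟩ := nonempty_of_mem_union_univ hF1 hB1
    have := hD.comp_mul_ind_mem_of_mem_ElpSet (e := Prod.snd) (B := Prod.fst ⁻¹' B1)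
      (fun x2 => ⟨(x1, x2), hx1, rfl⟩) (fun q hq m hm => ?_) hf2
    · simpa only [ind_preimage] using this
    obtain ⟨hqC, hlpq⟩ := hlp.prod_snd_mem_and_eq hC2 hCind hCC2 hq hB1
    convert mem_of_lt_lpOf hD (m := m) (by rwa [← hval _ hqC, hlpq]) using 1
    ext p
    simp only [ind_preimage, ind_prod]
    ring
  · rintro _ ⟨f1, hf1, B2, hB2, rfl⟩
    obtain ⟨x2, hx2⟩ := nonempty_of_mem_union_univ hF2 hB2
    have := hD.comp_mul_ind_mem_of_mem_ElpSet (e := Prod.fst) (B := Prod.snd ⁻¹' B2)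
      (fun x1 => ⟨(x1, x2), hx2, rfl⟩) (fun q hq m hm => ?_) hf1
    · simpa only [ind_preimage] using this
    obtain ⟨hqC, hlpq⟩ := hlp.prod_fst_mem_and_eq hC1 hCind hCC1 hq hB2
    convert mem_of_lt_lpOf hD (m := m) (by rwa [← hval _ hqC, hlpq]) using 1
    ext p
    simp only [ind_preimage, ind_prod]
    ring

end IndProductLP

end IndependentProduct

theorem stmt12_general {X1 X2 : Type*} [Nonempty X1] [Nonempty X2]
    (C1 : Set ((X1 → ℝ) × Set X1)) (hC1 : C1 ⊆ domC X1)
    (lp1 : (X1 → ℝ) → Set X1 → EReal) (hlp1 : Coherent C1 lp1)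
    (C2 : Set ((X2 → ℝ) × Set X2)) (hC2 : C2 ⊆ domC X2)
    (lp2 : (X2 → ℝ) → Set X2 → EReal) (hlp2 : Coherent C2 lp2)
    (F1 : Set (Set X1)) (F2 : Set (Set X2))
    (hF1 : ∀ A ∈ F1, A.Nonempty) (hF2 : ∀ A ∈ F2, A.Nonempty)
    (C : Set ((X1 × X2 → ℝ) × Set (X1 × X2)))
    (hCind : IndepDomain F1 F2 C)
    (hCC1 : ∀ p ∈ C1, ((fun q : X1 × X2 => p.1 q.1), p.2 ×ˢ (Set.univ : Set X2)) ∈ C)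
    (hCC2 : ∀ p ∈ C2, ((fun q : X1 × X2 => p.1 q.2), (Set.univ : Set X1) ×ˢ p.2) ∈ C) :
    IndProductLP F1 F2 C1 lp1 C2 lp2 C (lpProd C1 lp1 C2 lp2 F1 F2) ∧
    (∀ lp : (X1 × X2 → ℝ) → Set (X1 × X2) → EReal,
      IndProductLP F1 F2 C1 lp1 C2 lp2 C lp →
      ∀ p ∈ C, lpProd C1 lp1 C2 lp2 F1 F2 p.1 p.2 ≤ lp p.1 p.2) := by
  refine ⟨⟨coherent_lpProd hlp1 hlp2 hF1 hF2 C, ⟨?_, ?_⟩, fun p hp => ?_, fun p hp => ?_⟩, ?_⟩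
  · intro f1 B1 hf1 _ _ B2 hB2
    rw [lpProd_fst hlp1 hlp2 hF1 hF2 hf1 B1 (Or.inr rfl),
      lpProd_fst hlp1 hlp2 hF1 hF2 hf1 B1 (Or.inl hB2)]
  · intro f2 B2 hf2 _ _ B1 hB1
    rw [lpProd_snd hlp1 hlp2 hF1 hF2 hf2 B2 (Or.inr rfl),
      lpProd_snd hlp1 hlp2 hF1 hF2 hf2 B2 (Or.inl hB1)]
  · rw [lpProd_fst hlp1 hlp2 hF1 hF2 (hC1 hp).1 p.2 (Or.inr rfl)]
    exact hlp1.natExtLP_eq hp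
  · rw [lpProd_snd hlp1 hlp2 hF1 hF2 (hC2 hp).1 p.2 (Or.inr rfl)]
    exact hlp2.natExtLP_eq hp
  · intro lp hlp p hp
    obtain ⟨D, hD, hval⟩ := hlp.1
    rw [hval p hp]
    exact lpOf_mono (hlp.indNatExt_subset hC1 hC2 hF1 hF2 hCind hCC1 hCC2 hD hval) p.1 p.2

/-- Theorem 2: the restriction of `lp1 ⊗ lp2` to an independent
domain `C` containing the local domains is the pointwise smallest independent
product of `lp1` and `lp2`, i.e. their independent natural extension. -/
theorem stmt12 {X1 X2 : Type*} [Nonempty X1] [Nonempty X2]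
    (C1 : Set ((X1 → ℝ) × Set X1)) (hC1 : C1 ⊆ domC X1)
    (lp1 : (X1 → ℝ) → Set X1 → EReal) (hlp1 : Coherent C1 lp1)
    (C2 : Set ((X2 → ℝ) × Set X2)) (hC2 : C2 ⊆ domC X2)
    (lp2 : (X2 → ℝ) → Set X2 → EReal) (hlp2 : Coherent C2 lp2)
    (F1 : Set (Set X1)) (F2 : Set (Set X2))
    (hF1 : ∀ A ∈ F1, A.Nonempty) (hF2 : ∀ A ∈ F2, A.Nonempty)
    (C : Set ((X1 × X2 → ℝ) × Set (X1 × X2))) (hC : C ⊆ domC (X1 × X2))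
    (hCind : IndepDomain F1 F2 C)
    (hCC1 : ∀ p ∈ C1, ((fun q : X1 × X2 => p.1 q.1), p.2 ×ˢ (Set.univ : Set X2)) ∈ C)
    (hCC2 : ∀ p ∈ C2, ((fun q : X1 × X2 => p.1 q.2), (Set.univ : Set X1) ×ˢ p.2) ∈ C) :
    IndProductLP F1 F2 C1 lp1 C2 lp2 C (lpProd C1 lp1 C2 lp2 F1 F2) ∧
    (∀ lp : (X1 × X2 → ℝ) → Set (X1 × X2) → EReal,
      IndProductLP F1 F2 C1 lp1 C2 lp2 C lp →
      ∀ p ∈ C, lpProd C1 lp1 C2 lp2 F1 F2 p.1 p.2 ≤ lp p.1 p.2) :=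
  stmt12_general C1 hC1 lp1 hlp1 C2 hC2 lp2 hlp2 F1 F2 hF1 hF2 C hCind hCC1 hCC2

end IPaper
end

section
/- For each i ∈ {1,2}, let 𝔅'_i be a superset of 𝔅_i ⊆ P_∅(X_i) every element of which is a finite union of pairwise disjoint events in 𝔅_i. Then for any coherent sets of desirable gambles D1 on X1 and D2 on X2, the set D1 ⊗' D2 computed with the families 𝔅'_1, 𝔅'_2 equals the set D1 ⊗ D2 computed with 𝔅_1, 𝔅_2; consequently, for any coherent conditional lower previsions lp1 on C_1 ⊆ C(X1) and lp2 on C_2 ⊆ C(X2), the independent natural extensions lp1⊗'lp2 and lp1⊗lp2 on C(X1×X2) coincide. -/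
open scoped BigOperators

namespace IPaper

variable {X : Type*}

/-!
If `B = ⋃ k, B k` is a finite disjoint union of events of `𝔉₁`, the generator
`f₂(X₂) · 1_B(X₁)` of `D₁ ⊗' D₂` is the sum of the generators `f₂(X₂) · 1_{B k}(X₁)` of
`D₁ ⊗ D₂` (and symmetrically in the other coordinate). So each generating set lies in the
positive hull of the other, and the two positive hulls coincide. The lower previsions are
read off from these equal sets.
-/

open Function

section Posi

variable {Y : Type*} {S T : Set (Y → ℝ)}

lemma subset_posi_s13 : S ⊆ posi S := fun f hf =>
  ⟨0, fun _ => 1, fun _ => f, fun _ => one_pos, fun _ => hf, by simp⟩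

lemma smul_mem_posi {c : ℝ} (hc : 0 < c) {f : Y → ℝ} (hf : f ∈ posi S) : c • f ∈ posi S := by
  obtain ⟨n, l, h, hl, hh, rfl⟩ := hf
  exact ⟨n, c • l, h, fun i => mul_pos hc (hl i), hh, by simp [Finset.smul_sum, smul_smul]⟩

lemma add_mem_posi {f g : Y → ℝ} (hf : f ∈ posi S) (hg : g ∈ posi S) : f + g ∈ posi S := by
  obtain ⟨n, l, h, hl, hh, rfl⟩ := hf
  obtain ⟨m, l', h', hl', hh', rfl⟩ := hg
  -- `Fin (n + 1 + m + 1)` is definitionally `Fin ((n + 1) + (m + 1))`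
  refine ⟨n + 1 + m, (Fin.append l l' : Fin ((n + 1) + (m + 1)) → ℝ),
    (Fin.append h h' : Fin ((n + 1) + (m + 1)) → Y → ℝ), ?_, ?_, ?_⟩
  · exact (Fin.forall_fin_add (fun i => 0 < Fin.append l l' i)).2
      ⟨fun i => by simpa using hl i, fun i => by simpa using hl' i⟩
  · exact (Fin.forall_fin_add (fun i => Fin.append h h' i ∈ S)).2
      ⟨fun i => by simpa using hh i, fun i => by simpa using hh' i⟩
  · show _ = ∑ i : Fin ((n + 1) + (m + 1)), Fin.append l l' i • Fin.append h h' i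
    simp [Fin.sum_univ_add]

def posiCone (S : Set (Y → ℝ)) : ConvexCone ℝ (Y → ℝ) where
  carrier := posi S
  smul_mem' _ hc _ hf := smul_mem_posi hc hf
  add_mem' _ hf _ hg := add_mem_posi hf hg

lemma posi_subset_convexCone {C : ConvexCone ℝ (Y → ℝ)} (hS : S ⊆ C) : posi S ⊆ C := by
  rintro _ ⟨n, l, h, hl, hh, rfl⟩
  induction n with
  | zero => simpa using C.smul_mem (hl 0) (hS (hh 0))
  | succ n ih =>
    rw [Fin.sum_univ_succ]
    exact add_mem (C.smul_mem (hl 0) (hS (hh 0))) (ih _ _ (fun i => hl i.succ) fun i => hh i.succ)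

lemma posi_subset_posi (hST : S ⊆ posi T) : posi S ⊆ posi T :=
  posi_subset_convexCone (C := posiCone T) hST

lemma posi_mono (hST : S ⊆ T) : posi S ⊆ posi T :=
  posi_subset_posi (hST.trans subset_posi_s13)

end Posi

lemma ind_iUnion_of_pairwise_disjoint {W : Type*} {n : ℕ} {Bs : Fin n → Set W}
    (hd : Pairwise (Disjoint on Bs)) (w : W) : ind (⋃ k, Bs k) w = ∑ k, ind (Bs k) w := by
  simpa [ind] using Finset.indicator_biUnion_apply Finset.univ Bs (f := 1)
    (fun i _ j _ hij => hd hij) w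

lemma mul_ind_iUnion_mem_posi {Z W : Type*} {S : Set (Z → ℝ)} (g : Z → ℝ) (π : Z → W)
    {n : ℕ} {Bs : Fin n → Set W} (hne : (⋃ k, Bs k).Nonempty) (hd : Pairwise (Disjoint on Bs))
    (hS : ∀ k, (fun z => g z * ind (Bs k) (π z)) ∈ S) :
    (fun z => g z * ind (⋃ k, Bs k) (π z)) ∈ posi S := by
  obtain ⟨m, rfl⟩ : ∃ m, n = m + 1 :=
    Nat.exists_eq_succ_of_ne_zero fun hn => by subst hn; simp at hne
  refine ⟨m, fun _ => 1, fun k z => g z * ind (Bs k) (π z), fun _ => one_pos, hS, ?_⟩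
  ext z
  simp [ind_iUnion_of_pairwise_disjoint hd, Finset.mul_sum]

section Product

variable {X1 X2 : Type*} {F1 F1' : Set (Set X1)} {F2 F2' : Set (Set X2)}

lemma A12_mono (D2 : Set (X2 → ℝ)) (h : F1 ⊆ F1') : A12 D2 F1 ⊆ A12 D2 F1' := by
  rintro _ ⟨f2, hf2, B1, hB1, rfl⟩
  exact ⟨f2, hf2, B1, Set.union_subset_union_left _ h hB1, rfl⟩

lemma A21_mono (D1 : Set (X1 → ℝ)) (h : F2 ⊆ F2') : A21 D1 F2 ⊆ A21 D1 F2' := by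
  rintro _ ⟨f1, hf1, B2, hB2, rfl⟩
  exact ⟨f1, hf1, B2, Set.union_subset_union_left _ h hB2, rfl⟩

lemma A12_subset_posi_A12 (D2 : Set (X2 → ℝ)) (hne : ∀ A ∈ F1', A.Nonempty)
    (hu : ∀ A ∈ F1', ∃ (n : ℕ) (Bs : Fin n → Set X1),
      (∀ k, Bs k ∈ F1) ∧ Pairwise (Disjoint on Bs) ∧ A = ⋃ k, Bs k) :
    A12 D2 F1' ⊆ posi (A12 D2 F1) := by
  rintro _ ⟨f2, hf2, B1, hB1 | rfl, rfl⟩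
  · obtain ⟨n, Bs, hBs, hd, rfl⟩ := hu B1 hB1
    exact mul_ind_iUnion_mem_posi (S := A12 D2 F1) (fun p => f2 p.2) Prod.fst (hne _ hB1) hd
      fun k => ⟨f2, hf2, Bs k, Or.inl (hBs k), rfl⟩
  · exact subset_posi_s13 ⟨f2, hf2, _, Or.inr rfl, rfl⟩

lemma A21_subset_posi_A21 (D1 : Set (X1 → ℝ)) (hne : ∀ A ∈ F2', A.Nonempty)
    (hu : ∀ A ∈ F2', ∃ (n : ℕ) (Bs : Fin n → Set X2),
      (∀ k, Bs k ∈ F2) ∧ Pairwise (Disjoint on Bs) ∧ A = ⋃ k, Bs k) :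
    A21 D1 F2' ⊆ posi (A21 D1 F2) := by
  rintro _ ⟨f1, hf1, B2, hB2 | rfl, rfl⟩
  · obtain ⟨n, Bs, hBs, hd, rfl⟩ := hu B2 hB2
    exact mul_ind_iUnion_mem_posi (S := A21 D1 F2) (fun p => f1 p.1) Prod.snd (hne _ hB2) hd
      fun k => ⟨f1, hf1, Bs k, Or.inl (hBs k), rfl⟩
  · exact subset_posi_s13 ⟨f1, hf1, _, Or.inr rfl, rfl⟩

lemma indNatExt_eq_of_refines (D1 : Set (X1 → ℝ)) (D2 : Set (X2 → ℝ))
    (hne1 : ∀ A ∈ F1', A.Nonempty) (hne2 : ∀ A ∈ F2', A.Nonempty)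
    (hs1 : F1 ⊆ F1') (hs2 : F2 ⊆ F2')
    (hu1 : ∀ A ∈ F1', ∃ (n : ℕ) (Bs : Fin n → Set X1),
      (∀ k, Bs k ∈ F1) ∧ Pairwise (Disjoint on Bs) ∧ A = ⋃ k, Bs k)
    (hu2 : ∀ A ∈ F2', ∃ (n : ℕ) (Bs : Fin n → Set X2),
      (∀ k, Bs k ∈ F2) ∧ Pairwise (Disjoint on Bs) ∧ A = ⋃ k, Bs k) :
    indNatExt D1 D2 F1' F2' = indNatExt D1 D2 F1 F2 := by
  refine (posi_subset_posi ?_).antisymm (posi_mono (Set.union_subset_union_left _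
    (Set.union_subset_union (A12_mono D2 hs1) (A21_mono D1 hs2))))
  refine Set.union_subset (Set.union_subset ?_ ?_) (subset_posi_s13.trans (posi_mono ?_))
  · exact (A12_subset_posi_A12 D2 hne1 hu1).trans
      (posi_mono (Set.subset_union_left.trans Set.subset_union_left))
  · exact (A21_subset_posi_A21 D1 hne2 hu2).trans
      (posi_mono (Set.subset_union_right.trans Set.subset_union_left))
  · exact Set.subset_union_right

end Product

theorem stmt13_general {X1 X2 : Type*}
    (F1 F1' : Set (Set X1)) (F2 F2' : Set (Set X2))
    (hF1' : ∀ A ∈ F1', A.Nonempty) (hF2' : ∀ A ∈ F2', A.Nonempty)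
    (hs1 : F1 ⊆ F1') (hs2 : F2 ⊆ F2')
    (hu1 : ∀ A ∈ F1', ∃ (n : ℕ) (Bs : Fin n → Set X1),
      (∀ k, Bs k ∈ F1) ∧ (Pairwise fun i j => Disjoint (Bs i) (Bs j)) ∧ A = ⋃ k, Bs k)
    (hu2 : ∀ A ∈ F2', ∃ (n : ℕ) (Bs : Fin n → Set X2),
      (∀ k, Bs k ∈ F2) ∧ (Pairwise fun i j => Disjoint (Bs i) (Bs j)) ∧ A = ⋃ k, Bs k) :
    (∀ (D1 : Set (X1 → ℝ)) (D2 : Set (X2 → ℝ)), CoherentSDG D1 → CoherentSDG D2 →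
      indNatExt D1 D2 F1' F2' = indNatExt D1 D2 F1 F2) ∧
    (∀ (C1 : Set ((X1 → ℝ) × Set X1)) (lp1 : (X1 → ℝ) → Set X1 → EReal)
        (C2 : Set ((X2 → ℝ) × Set X2)) (lp2 : (X2 → ℝ) → Set X2 → EReal),
      C1 ⊆ domC X1 → Coherent C1 lp1 → C2 ⊆ domC X2 → Coherent C2 lp2 →
      ∀ (f : X1 × X2 → ℝ) (B : Set (X1 × X2)),
        lpProd C1 lp1 C2 lp2 F1' F2' f B = lpProd C1 lp1 C2 lp2 F1 F2 f B) := by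
  have key D1 D2 := indNatExt_eq_of_refines (F1 := F1) (F2 := F2) D1 D2 hF1' hF2' hs1 hs2 hu1 hu2
  exact ⟨fun D1 D2 _ _ => key D1 D2,
    fun C1 lp1 C2 lp2 _ _ _ _ f B => by rw [lpProd, lpProd, key]⟩

/-- Proposition 13: enlarging the families of conditioning events by
finite disjoint unions does not change the independent natural extension. -/
theorem stmt13 {X1 X2 : Type*} [Nonempty X1] [Nonempty X2]
    (F1 F1' : Set (Set X1)) (F2 F2' : Set (Set X2))
    (hF1 : ∀ A ∈ F1, A.Nonempty) (hF2 : ∀ A ∈ F2, A.Nonempty)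
    (hF1' : ∀ A ∈ F1', A.Nonempty) (hF2' : ∀ A ∈ F2', A.Nonempty)
    (hs1 : F1 ⊆ F1') (hs2 : F2 ⊆ F2')
    (hu1 : ∀ A ∈ F1', ∃ (n : ℕ) (Bs : Fin n → Set X1),
      (∀ k, Bs k ∈ F1) ∧ (Pairwise fun i j => Disjoint (Bs i) (Bs j)) ∧ A = ⋃ k, Bs k)
    (hu2 : ∀ A ∈ F2', ∃ (n : ℕ) (Bs : Fin n → Set X2),
      (∀ k, Bs k ∈ F2) ∧ (Pairwise fun i j => Disjoint (Bs i) (Bs j)) ∧ A = ⋃ k, Bs k) :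
    (∀ (D1 : Set (X1 → ℝ)) (D2 : Set (X2 → ℝ)), CoherentSDG D1 → CoherentSDG D2 →
      indNatExt D1 D2 F1' F2' = indNatExt D1 D2 F1 F2) ∧
    (∀ (C1 : Set ((X1 → ℝ) × Set X1)) (lp1 : (X1 → ℝ) → Set X1 → EReal)
        (C2 : Set ((X2 → ℝ) × Set X2)) (lp2 : (X2 → ℝ) → Set X2 → EReal),
      C1 ⊆ domC X1 → Coherent C1 lp1 → C2 ⊆ domC X2 → Coherent C2 lp2 →
      ∀ (f : X1 × X2 → ℝ) (B : Set (X1 × X2)),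
        lpProd C1 lp1 C2 lp2 F1' F2' f B = lpProd C1 lp1 C2 lp2 F1 F2 f B) :=
  stmt13_general F1 F1' F2 F2' hF1' hF2' hs1 hs2 hu1 hu2

end IPaper
end
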